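/- Let b ≥ 1 be an integer and let p, q be reals with 0 ≤ p < 1 and p + q = b. Then p · Σ_{ℓ=0}^{b−1} (q^ℓ/ℓ!) · ∫₀¹ ζ^ℓ e^{−bζ} dζ ≥ p · H(b−1) ≥ ((19 − 67·e^{−3})/27) · p, where H(m) = ∫₀¹ e^{−ζ} · ( Σ_{ℓ=0}^{m} e^{−mζ}(mζ)^ℓ/ℓ! ) dζ for a nonnegative integer m. -/

import Mathlib

/-!
Write `F_m(x) = Pr[Pois(x) ≤ m]` and `R = (m/(m+1))^(m+1)`. Since `q > b - 1 = m`, the first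
inequality holds termwise. For the second, `ζ ↦ -e^{-ζ} F_m(mζ) + R F_m((m+1)ζ)` is an
antiderivative of the integrand of `H m`, so `H m = 1 - R - e^{-1} F_m(m) + R F_m(m+1)`.
For `m ≥ 8`, `R ≤ e^{-1}` and `F_m(m+1) ≤ 1` give `H m ≥ 1 - e^{-1} (1 + F_m(m) - F_m(m+1))`, and
by the mean value theorem the gap `F_m(m) - F_m(m+1)` is at most the largest Poisson mass
`m^m e^{-m} / m! ≤ 1 / √(2πm)` (Stirling). For `m < 8` the closed form is evaluated numerically;
`m = 2` is the equality case.
-/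

/-- `H m = ∫₀¹ e^{-ζ} Pr[Pois(mζ) ≤ m] dζ`. -/
noncomputable def H (m : ℕ) : ℝ :=
  ∫ ζ in (0:ℝ)..1, Real.exp (-ζ) *
    ∑ ℓ ∈ Finset.range (m + 1),
      Real.exp (-((m : ℝ) * ζ)) * ((m : ℝ) * ζ) ^ ℓ / (Nat.factorial ℓ : ℝ)

open Finset Real Nat

noncomputable def poissonCDF (m : ℕ) (x : ℝ) : ℝ :=
  ∑ ℓ ∈ range (m + 1), exp (-x) * x ^ ℓ / ℓ !

theorem poissonCDF_eq_exp_neg_mul_sum (m : ℕ) (x : ℝ) :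
    poissonCDF m x = exp (-x) * ∑ ℓ ∈ range (m + 1), x ^ ℓ / ℓ ! := by
  simp only [poissonCDF, mul_sum, mul_div_assoc]

theorem poissonCDF_zero (m : ℕ) : poissonCDF m 0 = 1 := by
  simp [poissonCDF_eq_exp_neg_mul_sum, sum_range_succ']

theorem poissonCDF_le_one (m : ℕ) {x : ℝ} (hx : 0 ≤ x) : poissonCDF m x ≤ 1 := by
  rw [poissonCDF_eq_exp_neg_mul_sum, exp_neg, inv_mul_le_one₀ (exp_pos x)]
  exact sum_le_exp_of_nonneg hx _

theorem hasDerivAt_poissonCDF (m : ℕ) (x : ℝ) :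
    HasDerivAt (poissonCDF m) (-(exp (-x) * x ^ m / m !)) x := by
  induction m with
  | zero =>
    have h0 : poissonCDF 0 = fun y => exp (-y) := funext fun y => by simp [poissonCDF]
    simpa [h0] using (hasDerivAt_neg x).exp
  | succ m ih =>
    have hsucc : poissonCDF (m + 1) = fun y => poissonCDF m y + exp (-y) * y ^ (m + 1) / (m + 1)! :=
      funext fun y => sum_range_succ _ _
    have hterm : HasDerivAt (fun y => exp (-y) * y ^ (m + 1) / (m + 1)!)
        ((-exp (-x) * x ^ (m + 1) + exp (-x) * ((m + 1 : ℕ) * x ^ m)) / (m + 1)!) x :=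
      (((hasDerivAt_neg x).exp.congr_deriv (by simp)).mul (hasDerivAt_pow (m + 1) x)).div_const _
    rw [hsucc]
    refine (ih.add hterm).congr_deriv ?_
    rw [factorial_succ]
    push_cast
    field_simp
    ring

theorem continuous_poissonCDF (m : ℕ) : Continuous (poissonCDF m) :=
  continuous_iff_continuousAt.2 fun x => (hasDerivAt_poissonCDF m x).continuousAt

theorem pow_mul_exp_neg_le (m : ℕ) {x : ℝ} (hx : 0 ≤ x) :
    x ^ m * exp (-x) ≤ (m : ℝ) ^ m * exp (-m) := by
  rcases eq_or_ne m 0 with rfl | hm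
  · simpa using hx
  have hm0 : (0 : ℝ) < m := by positivity
  have hbase : x ≤ m * exp (x / m - 1) := by
    have := add_one_le_exp (x / m - 1)
    rw [sub_add_cancel, div_le_iff₀ hm0] at this
    linarith
  have hpow : x ^ m ≤ (m : ℝ) ^ m * exp (x - m) := by
    calc x ^ m ≤ (m * exp (x / m - 1)) ^ m := pow_le_pow_left₀ hx hbase m
      _ = (m : ℝ) ^ m * exp (x - m) := by
        rw [mul_pow, ← exp_nat_mul]
        congr 2
        field_simp
  calc x ^ m * exp (-x) ≤ (m : ℝ) ^ m * exp (x - m) * exp (-x) := by gcongr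
    _ = (m : ℝ) ^ m * exp (-m) := by rw [mul_assoc, ← exp_add]; ring_nf

theorem poissonCDF_sub_poissonCDF_add_one_le (m : ℕ) {x : ℝ} (hx : 0 ≤ x) :
    poissonCDF m x - poissonCDF m (x + 1) ≤ (m : ℝ) ^ m * exp (-m) / m ! := by
  obtain ⟨c, hc, hslope⟩ := exists_hasDerivAt_eq_slope (poissonCDF m) _ (lt_add_one x)
    (continuous_poissonCDF m).continuousOn fun y _ => hasDerivAt_poissonCDF m y
  rw [add_sub_cancel_left, div_one] at hslope
  have hmax := pow_mul_exp_neg_le m (hx.trans hc.1.le)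
  rw [← neg_sub, ← hslope, neg_neg, mul_comm]
  gcongr

theorem pow_mul_exp_neg_div_factorial_le {m : ℕ} (hm : m ≠ 0) :
    (m : ℝ) ^ m * exp (-m) / m ! ≤ 1 / √(2 * π * m) := by
  have hsqrt : 0 < √(2 * π * m) := by positivity
  rw [div_le_div_iff₀ (by positivity) hsqrt, one_mul]
  calc (m : ℝ) ^ m * exp (-m) * √(2 * π * m) = √(2 * π * m) * (m / exp 1) ^ m := by
        rw [div_pow, ← exp_nat_mul, mul_one, div_eq_mul_inv, ← exp_neg]; ring
    _ ≤ m ! := Stirling.le_factorial_stirling m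

theorem integral_exp_neg_mul_poissonCDF (m : ℕ) {c : ℝ} (hc : c + 1 ≠ 0) :
    ∫ ζ in (0:ℝ)..1, exp (-ζ) * poissonCDF m (c * ζ) =
      1 - (c / (c + 1)) ^ (m + 1) - exp (-1) * poissonCDF m c
        + (c / (c + 1)) ^ (m + 1) * poissonCDF m (c + 1) := by
  set R := (c / (c + 1)) ^ (m + 1)
  -- the two Poisson point masses produced by differentiating cancel, by the choice of `R`
  have hderiv : ∀ ζ ∈ Set.uIcc (0:ℝ) 1,
      HasDerivAt (fun ζ => -exp (-ζ) * poissonCDF m (c * ζ) + R * poissonCDF m ((c + 1) * ζ))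
        (exp (-ζ) * poissonCDF m (c * ζ)) ζ := by
    intro ζ _
    have hF := fun a : ℝ => (hasDerivAt_poissonCDF m (a * ζ)).comp ζ
      ((hasDerivAt_id ζ).const_mul a)
    refine ((((hasDerivAt_neg ζ).exp.neg).mul (hF c)).add ((hF (c + 1)).const_mul R)).congr_deriv ?_
    have hexp : exp (-((c + 1) * ζ)) = exp (-ζ) * exp (-(c * ζ)) := by rw [← exp_add]; ring_nf
    simp only [R, hexp, Pi.neg_apply, Function.comp_apply, mul_one, div_pow, mul_pow]
    field_simp
    ring
  rw [intervalIntegral.integral_eq_sub_of_hasDerivAt hderiv]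
  · simp only [mul_one, neg_mul, neg_zero, exp_zero, mul_zero, poissonCDF_zero]
    ring
  · exact (((continuous_neg.rexp).mul
      ((continuous_poissonCDF m).comp (continuous_const.mul continuous_id)))).intervalIntegrable _ _

-- the integrand of `H m` is `exp (-ζ) * poissonCDF m (m * ζ)` by definition
theorem H_eq (m : ℕ) :
    H m = 1 - ((m : ℝ) / (m + 1)) ^ (m + 1) - exp (-1) * poissonCDF m m
      + ((m : ℝ) / (m + 1)) ^ (m + 1) * poissonCDF m (m + 1) :=
  integral_exp_neg_mul_poissonCDF m (by positivity)

theorem H_eq_sum_integral (m : ℕ) :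
    H m = ∑ ℓ ∈ range (m + 1),
      (m : ℝ) ^ ℓ / ℓ ! * ∫ ζ in (0:ℝ)..1, ζ ^ ℓ * exp (-((m + 1) * ζ)) := by
  have hint : ∀ ℓ ∈ range (m + 1), IntervalIntegrable
      (fun ζ : ℝ => (m : ℝ) ^ ℓ / ℓ ! * (ζ ^ ℓ * exp (-((m + 1) * ζ)))) MeasureTheory.volume 0 1 :=
    fun ℓ _ => by apply Continuous.intervalIntegrable; fun_prop
  simp only [← intervalIntegral.integral_const_mul, ← intervalIntegral.integral_finsetSum hint]
  refine intervalIntegral.integral_congr fun ζ _ => ?_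
  simp only [mul_sum]
  refine sum_congr rfl fun ℓ _ => ?_
  rw [show -((m + 1) * ζ) = -ζ + -(m * ζ) by ring, exp_add, mul_pow]
  ring

theorem H_le_sum_integral {m : ℕ} {q : ℝ} (hq : m ≤ q) :
    H m ≤ ∑ ℓ ∈ range (m + 1),
      q ^ ℓ / ℓ ! * ∫ ζ in (0:ℝ)..1, ζ ^ ℓ * exp (-((m + 1) * ζ)) := by
  rw [H_eq_sum_integral]
  refine sum_le_sum fun ℓ _ => ?_
  have hJ : 0 ≤ ∫ ζ in (0:ℝ)..1, ζ ^ ℓ * exp (-((m + 1) * ζ)) :=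
    intervalIntegral.integral_nonneg zero_le_one fun ζ hζ => by have := hζ.1; positivity
  gcongr

theorem exp_neg_natCast (n : ℕ) : exp (-n) = exp (-1) ^ n := by
  rw [← exp_nat_mul, mul_neg_one]

theorem le_H_of_eight_le {m : ℕ} (hm : 8 ≤ m) : (19 - 67 * exp (-3)) / 27 ≤ H m := by
  set R := ((m : ℝ) / (m + 1)) ^ (m + 1)
  have hR : R ≤ exp (-1) := by
    calc R ≤ exp (-(1 / (m + 1))) ^ (m + 1) := by
          unfold R
          gcongr
          have := add_one_le_exp (-(1 / ((m : ℝ) + 1)))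
          rwa [neg_add_eq_sub, one_sub_div (by positivity), add_sub_cancel_right] at this
      _ = exp (-1) := by rw [← exp_nat_mul]; push_cast; field_simp
  have hF : poissonCDF m (m + 1) ≤ 1 := poissonCDF_le_one m (by positivity)
  have hsqrt : 7.087 ≤ √(2 * π * m) := by
    rw [le_sqrt (by norm_num) (by positivity)]
    have : (8 : ℝ) ≤ m := by exact_mod_cast hm
    nlinarith [pi_gt_d2]
  have hgap : poissonCDF m m - poissonCDF m (m + 1) ≤ 0.1412 := by
    calc _ ≤ (m : ℝ) ^ m * exp (-m) / m ! := poissonCDF_sub_poissonCDF_add_one_le m (by positivity)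
      _ ≤ 1 / √(2 * π * m) := pow_mul_exp_neg_div_factorial_le (by omega)
      _ ≤ 1 / 7.087 := by gcongr
      _ ≤ 0.1412 := by norm_num
  have hlow : 1 - exp (-1) * (1 + 0.1412) ≤ H m := by
    rw [H_eq]
    nlinarith [mul_nonneg (sub_nonneg.2 hR) (sub_nonneg.2 hF), exp_pos (-1)]
  have he3 : 0.36787944116 ^ 3 ≤ exp (-3) := by
    rw [show (-3 : ℝ) = -(3 : ℕ) by norm_num, exp_neg_natCast]
    gcongr
    exact exp_neg_one_gt_d9.le
  linarith [exp_neg_one_lt_d9]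

theorem le_H_of_lt_eight {m : ℕ} (hm : m < 8) : (19 - 67 * exp (-3)) / 27 ≤ H m := by
  have hu : exp (-1) ^ (m + 1) ≤ 0.3678794412 ^ (m + 1) := by
    gcongr
    exact exp_neg_one_lt_d9.le
  have hl : 0.36787944116 ^ 3 ≤ exp (-1) ^ 3 := by
    gcongr
    exact exp_neg_one_gt_d9.le
  have hF : ∀ n : ℕ, poissonCDF m n = exp (-1) ^ n * ∑ ℓ ∈ range (m + 1), (n : ℝ) ^ ℓ / ℓ ! := by
    intro n
    rw [poissonCDF_eq_exp_neg_mul_sum, exp_neg_natCast]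
  rw [H_eq, show (m : ℝ) + 1 = (m + 1 : ℕ) by push_cast; ring, hF, hF,
    show (-3 : ℝ) = -(3 : ℕ) by norm_num, exp_neg_natCast]
  interval_cases m <;> norm_num [sum_range_succ, factorial] at hu ⊢ <;> linarith

theorem le_H (m : ℕ) : (19 - 67 * exp (-3)) / 27 ≤ H m :=
  (lt_or_ge m 8).elim le_H_of_lt_eight le_H_of_eight_le

theorem stmt_9 (b : ℕ) (hb : 1 ≤ b) (p q : ℝ) (hp0 : 0 ≤ p) (hp1 : p < 1)
    (hpq : p + q = (b : ℝ)) :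
    p * ∑ ℓ ∈ Finset.range b,
        q ^ ℓ / (Nat.factorial ℓ : ℝ) * ∫ ζ in (0:ℝ)..1, ζ ^ ℓ * Real.exp (-((b : ℝ) * ζ))
      ≥ p * H (b - 1) ∧
    p * H (b - 1) ≥ ((19 - 67 * Real.exp (-3)) / 27) * p := by
  obtain ⟨m, rfl⟩ : ∃ m, b = m + 1 := ⟨b - 1, by omega⟩
  have hq : (m : ℝ) ≤ q := by push_cast at hpq; linarith
  refine ⟨mul_le_mul_of_nonneg_left ?_ hp0, ?_⟩
  · simpa using H_le_sum_integral hq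
  · simpa [mul_comm p] using mul_le_mul_of_nonneg_right (le_H m) hp0
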